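/- Let θ : (-t₀, t₀) → ℝ and φ : (-t₀,t₀) × Σ → ℝ with φ > 0, and suppose θ satisfies on each slice Σ_t the evolution equation dθ/dt = L_t(φ) + τφθ, where L_t(φ) = -Δφ + 2⟨X,∇φ⟩ + (Q - ½θ² + div X - |X|²)φ and τ is bounded. Fix ε ∈ (0,t₀), choose a constant c with τφ ≤ c on [0,ε]×Σ, and suppose θ(t) ≥ 0 on [0,ε). If θ(0) = 0 and for every t ∈ [0,ε) the positivity L_t(φ) > 0 (pointwise on Σ) is impossible, then θ ≡ 0 on [0,ε). -/

import Mathlib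

/-!
Pick, for each `t`, a point where `L_t(φ) ≤ 0`; there the evolution equation and `θ ≥ 0`,
`τφ ≤ c` give the differential inequality `θ' ≤ c θ`. By Grönwall, `θ` then stays below the
solution of `y' = c y`, `y(0) = 0`, which is `0`; together with `θ ≥ 0` this forces `θ ≡ 0`.
-/

open Set

theorem le_zero_of_hasDerivAt_le_mul_self {θ θ' : ℝ → ℝ} {a b c : ℝ}
    (hderiv : ∀ t ∈ Ico a b, HasDerivAt θ (θ' t) t)
    (hbound : ∀ t ∈ Ico a b, θ' t ≤ c * θ t) (ha : θ a = 0) :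
    ∀ t ∈ Ico a b, θ t ≤ 0 := by
  intro t ht
  have hsub : Icc a t ⊆ Ico a b := Icc_subset_Ico_right ht.2
  have hcont : ContinuousOn θ (Icc a t) := fun s hs =>
    (hderiv s (hsub hs)).continuousAt.continuousWithinAt
  calc θ t ≤ gronwallBound 0 c 0 (t - a) :=
        le_gronwallBound_of_liminf_deriv_right_le hcont
          (fun s hs _ hr => (hderiv s (hsub (Ico_subset_Icc_self hs))).hasDerivWithinAt
            |>.liminf_right_slope_le hr)
          ha.le (fun s hs => by simpa using hbound s (hsub (Ico_subset_Icc_self hs)))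
          t (right_mem_Icc.mpr ht.1)
    _ = 0 := gronwallBound_ε0_δ0 c _

theorem stmt_9_general {M : Type*}
    (t₀ ε : ℝ) (hε : ε ∈ Set.Ioo 0 t₀)
    (θ θ' : ℝ → ℝ) (φ τ Lφ : ℝ → M → ℝ) (c : ℝ)
    (hdiff : ∀ t ∈ Set.Ioo (-t₀) t₀, HasDerivAt θ (θ' t) t)
    (hevol : ∀ t ∈ Set.Ioo (-t₀) t₀, ∀ x, θ' t = Lφ t x + τ t x * φ t x * θ t)
    (hc : ∀ t ∈ Set.Icc 0 ε, ∀ x, τ t x * φ t x ≤ c)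
    (hnonneg : ∀ t ∈ Set.Ico (0:ℝ) ε, 0 ≤ θ t)
    (h0 : θ 0 = 0)
    (hnopos : ∀ t ∈ Set.Ico (0:ℝ) ε, ¬ (∀ x, 0 < Lφ t x)) :
    ∀ t ∈ Set.Ico (0:ℝ) ε, θ t = 0 := by
  obtain ⟨hε0, hεt₀⟩ := hε
  have hsub : Ico 0 ε ⊆ Ioo (-t₀) t₀ := fun t ht =>
    ⟨by linarith [ht.1], ht.2.trans hεt₀⟩
  have hbound : ∀ t ∈ Ico 0 ε, θ' t ≤ c * θ t := by
    intro t ht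
    obtain ⟨x, hLx⟩ := not_forall.mp (hnopos t ht)
    rw [hevol t (hsub ht) x]
    nlinarith [not_lt.mp hLx, hc t (Ico_subset_Icc_self ht) x, hnonneg t ht]
  exact fun t ht => le_antisymm
    (le_zero_of_hasDerivAt_le_mul_self (fun s hs => hdiff s (hsub hs)) hbound h0 t ht)
    (hnonneg t ht)

/-- Core analytic step of Theorem 3.1: along the foliation `M_t`, the constant null
expansion `θ(t)` satisfies the evolution equation `dθ/dt = L_t(φ) + τφθ` (pointwise on
`M`, where `Lφ t x` denotes `L_t(φ)(x)`).  If `φ > 0`, `τφ ≤ c` on `[0,ε] × M`,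
`θ ≥ 0` on `[0,ε)`, `θ(0) = 0`, and for no `t ∈ [0,ε)` is `L_t(φ) > 0` everywhere on
`M`, then `θ ≡ 0` on `[0,ε)`. -/
theorem stmt_9 {M : Type*} [TopologicalSpace M] [CompactSpace M] [Nonempty M]
    (t₀ ε : ℝ) (hε : ε ∈ Set.Ioo 0 t₀)
    (θ θ' : ℝ → ℝ) (φ τ Lφ : ℝ → M → ℝ) (c : ℝ)
    (hφpos : ∀ t ∈ Set.Ioo (-t₀) t₀, ∀ x, 0 < φ t x)
    (hdiff : ∀ t ∈ Set.Ioo (-t₀) t₀, HasDerivAt θ (θ' t) t)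
    (hevol : ∀ t ∈ Set.Ioo (-t₀) t₀, ∀ x, θ' t = Lφ t x + τ t x * φ t x * θ t)
    (hc : ∀ t ∈ Set.Icc 0 ε, ∀ x, τ t x * φ t x ≤ c)
    (hnonneg : ∀ t ∈ Set.Ico (0:ℝ) ε, 0 ≤ θ t)
    (h0 : θ 0 = 0)
    (hnopos : ∀ t ∈ Set.Ico (0:ℝ) ε, ¬ (∀ x, 0 < Lφ t x)) :
    ∀ t ∈ Set.Ico (0:ℝ) ε, θ t = 0 :=
  stmt_9_general t₀ ε hε θ θ' φ τ Lφ c hdiff hevol hc hnonneg h0 hnopos
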